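/- arXiv:1307.0083 — 2 statements merged into one kernel-verified Lean document; each statement's English description precedes it below -/
import Mathlib

section
/- Let n ≥ 2 be a positive integer, let p be a prime number, and let a be the exponent of p in the prime factorization of n (i.e. a is the largest integer with p^a dividing n; a = 0 if p does not divide n). If p^(a+1) < log n, then G(n·p) > G(n), where log denotes the natural logarithm. -/
open ArithmeticFunction Real

/-- The Grönwall function `G(n) = σ(n) / (n · log log n)`. -/
noncomputable def G (n : ℕ) : ℝ := (ArithmeticFunction.sigma 1 n : ℝ) / (n * Real.log (Real.log n))

/-!
Write `n = p^a m` with `p ∤ m` and `s = σ(p^a)`. Multiplicativity gives `σ(np) = p σ(n) + σ(m)`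
and `σ(n) = s σ(m)`, so `G(np) > G(n)` amounts to `p s (log log (np) - log log n) < log log n`.
Here `p s ≤ (a + 1) p^(a+1)`, while `log log (np) - log log n ≤ log p / log n` by concavity of `log`;
the hypothesis `p^(a+1) < log n` makes the product smaller than `(a + 1) log p = log p^(a+1)`,
which is again smaller than `log log n`.
-/

open scoped ArithmeticFunction.sigma

namespace ArithmeticFunction

theorem sigma_one_le_sigma_zero_mul (n : ℕ) : σ 1 n ≤ σ 0 n * n := by
  rw [sigma_one_apply, sigma_zero_apply]
  exact Finset.sum_le_card_nsmul _ _ _ fun _ hd => Nat.divisor_le hd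

theorem sigma_one_prime_pow_le {p : ℕ} (hp : p.Prime) (a : ℕ) :
    σ 1 (p ^ a) ≤ (a + 1) * p ^ a := by
  simpa only [sigma_zero_apply_prime_pow hp] using sigma_one_le_sigma_zero_mul (p ^ a)

theorem sigma_one_prime_pow_succ {p : ℕ} (hp : p.Prime) (a : ℕ) :
    σ 1 (p ^ (a + 1)) = p * σ 1 (p ^ a) + 1 := by
  rw [sigma_one_apply_prime_pow hp, sigma_one_apply_prime_pow hp, geom_sum_succ]

variable {n p : ℕ}

theorem sigma_one_eq_mul_ordCompl (hp : p.Prime) (hn : n ≠ 0) :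
    σ 1 n = σ 1 (p ^ n.factorization p) * σ 1 (n / p ^ n.factorization p) := by
  conv_lhs => rw [← Nat.ordProj_mul_ordCompl_eq_self n p]
  exact isMultiplicative_sigma.map_mul_of_coprime ((Nat.coprime_ordCompl hp hn).pow_left _)

theorem sigma_one_mul_prime (hp : p.Prime) (hn : n ≠ 0) :
    σ 1 (n * p) = p * σ 1 n + σ 1 (n / p ^ n.factorization p) := by
  have hsplit : n * p = p ^ (n.factorization p + 1) * (n / p ^ n.factorization p) := by
    conv_lhs => rw [← Nat.ordProj_mul_ordCompl_eq_self n p]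
    ring
  rw [hsplit, isMultiplicative_sigma.map_mul_of_coprime ((Nat.coprime_ordCompl hp hn).pow_left _),
    sigma_one_prime_pow_succ hp, sigma_one_eq_mul_ordCompl hp hn]
  ring

end ArithmeticFunction

namespace Real

theorem log_add_sub_log_le {u v : ℝ} (hu : 0 < u) (huv : 0 < u + v) :
    log (u + v) - log u ≤ v / u := by
  rw [← log_div huv.ne' hu.ne']
  calc log ((u + v) / u) ≤ (u + v) / u - 1 := log_le_sub_one_of_pos (div_pos huv hu)
    _ = v / u := by field_simp; ring

theorem log_log_mul_sub_log_log_le {x y : ℝ} (hx : 1 < x) (hy : 1 ≤ y) :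
    log (log (x * y)) - log (log x) ≤ log y / log x := by
  have hlogx := log_pos hx
  rw [log_mul (by positivity) (by positivity)]
  exact log_add_sub_log_le hlogx (by linarith [log_nonneg hy])

end Real

theorem G_lt_G_mul_prime {n p : ℕ} (hp : p.Prime) (hlog : 1 < Real.log n)
    (hincr : p * σ 1 (p ^ n.factorization p) * (Real.log (Real.log (n * p)) - Real.log (Real.log n))
      < Real.log (Real.log n)) :
    G n < G (n * p) := by
  have hn : n ≠ 0 := by
    rintro rfl
    norm_num at hlog
  have hn' : (0 : ℝ) < n := by positivity
  have hp' : (1 : ℝ) < p := by exact_mod_cast hp.one_lt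
  have hL : 0 < Real.log (Real.log n) := log_pos hlog
  have hLL' : Real.log (Real.log n) ≤ Real.log (Real.log (n * p)) :=
    log_le_log (by linarith) (log_le_log hn' (by nlinarith))
  have hm : (0 : ℝ) < σ 1 (n / p ^ n.factorization p) := by
    exact_mod_cast sigma_pos 1 _ (Nat.ordCompl_pos p hn).ne'
  unfold G
  rw [sigma_one_mul_prime hp hn, sigma_one_eq_mul_ordCompl hp hn]
  push_cast
  rw [div_lt_div_iff₀ (by positivity) (mul_pos (by positivity) (hL.trans_le hLL'))]
  have hgap := mul_pos (mul_pos hn' hm) (sub_pos.2 hincr)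
  linear_combination hgap

theorem gronwall_increase_of_prime_pow_lt_log_general (n : ℕ) (p : ℕ) (hp : p.Prime)
    (h : (p : ℝ) ^ (n.factorization p + 1) < Real.log n) :
    G (n * p) > G n := by
  set a := n.factorization p
  have hp' : (1 : ℝ) < p := by exact_mod_cast hp.one_lt
  have hlogp : 0 < Real.log p := log_pos hp'
  have hlog : 1 < Real.log n := by linarith [le_self_pow₀ hp'.le (by omega : a + 1 ≠ 0)]
  have hsigma : (σ 1 (p ^ a) : ℝ) ≤ (a + 1) * p ^ a := by
    exact_mod_cast sigma_one_prime_pow_le hp a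
  have hincr : Real.log (Real.log (n * p)) - Real.log (Real.log n) ≤ Real.log p / Real.log n :=
    log_log_mul_sub_log_log_le ((log_pos_iff n.cast_nonneg).1 (by linarith)) hp'.le
  have hlogpow : (a + 1) * Real.log p < Real.log (Real.log n) := by
    rw [← Nat.cast_succ, ← log_pow]
    exact log_lt_log (by positivity) h
  refine G_lt_G_mul_prime hp hlog ?_
  calc (p : ℝ) * σ 1 (p ^ a) * (Real.log (Real.log (n * p)) - Real.log (Real.log n))
      ≤ p * σ 1 (p ^ a) * (Real.log p / Real.log n) :=
        mul_le_mul_of_nonneg_left hincr (by positivity)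
    _ ≤ p * ((a + 1) * p ^ a) * (Real.log p / Real.log n) :=
        mul_le_mul_of_nonneg_right (mul_le_mul_of_nonneg_left hsigma (by positivity))
          (div_nonneg hlogp.le (by linarith))
    _ = (a + 1) * Real.log p * (p ^ (a + 1) / Real.log n) := by ring
    _ < (a + 1) * Real.log p * 1 := by
        gcongr
        exact (div_lt_one (by linarith)).2 h
    _ < Real.log (Real.log n) := by rwa [mul_one]

theorem gronwall_increase_of_prime_pow_lt_log (n : ℕ) (hn : 2 ≤ n) (p : ℕ) (hp : p.Prime)
    (h : (p : ℝ) ^ (n.factorization p + 1) < Real.log n) :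
    G (n * p) > G n :=
  gronwall_increase_of_prime_pow_lt_log_general n p hp h
end

section
/- Let n ≥ 3 be a positive integer, let p be a prime number, and let a be the exponent of p in the prime factorization of n (a = 0 if p does not divide n). Then G(n·p) > G(n) holds if and only if (log n)^(1/S) > 1 + (log p)/(log n), where S = Σ_{α=1}^{a+1} p^α and log denotes the natural logarithm. -/
/-!
Write `a = vₚ(n)`. Since `σ` is multiplicative, `σ(np)/σ(n) = σ(p^(a+1))/σ(p^a) = p(S+1)/S`,
so `G(np) > G(n)` becomes `S · log log (np) < (S+1) · log log n`, i.e. `(log np)^S < (log n)^(S+1)`.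
As `log np = log n · (1 + log p / log n)`, this is the `S`-th power of the claimed inequality.
-/

open ArithmeticFunction Real

open scoped ArithmeticFunction.sigma

theorem ArithmeticFunction.sigma_one_mul_prime_mul_sigma_one_ordProj {n p : ℕ} (hn : n ≠ 0)
    (hp : p.Prime) :
    σ 1 (n * p) * σ 1 (p ^ n.factorization p) = σ 1 n * σ 1 (p ^ (n.factorization p + 1)) := by
  set a := n.factorization p
  set m := n / p ^ a
  have hcop : p.Coprime m := Nat.coprime_ordCompl hp hn
  have hn_eq : p ^ a * m = n := Nat.ordProj_mul_ordCompl_eq_self n p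
  have hσn : σ 1 n = σ 1 (p ^ a) * σ 1 m := by
    rw [← isMultiplicative_sigma.map_mul_of_coprime (hcop.pow_left a), hn_eq]
  have hσnp : σ 1 (n * p) = σ 1 (p ^ (a + 1)) * σ 1 m := by
    rw [← isMultiplicative_sigma.map_mul_of_coprime (hcop.pow_left (a + 1)), ← hn_eq]
    ring_nf
  rw [hσn, hσnp]
  ring

theorem Nat.Prime.mul_sigma_one_pow {p : ℕ} (hp : p.Prime) (k : ℕ) :
    p * σ 1 (p ^ k) = ∑ α ∈ Finset.Icc 1 (k + 1), p ^ α := by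
  rw [sigma_one_apply_prime_pow hp, Finset.mul_sum, ← Finset.Ico_add_one_right_eq_Icc,
    Finset.sum_Ico_eq_sum_range]
  simp only [add_tsub_cancel_right, pow_succ', add_comm 1]

theorem Nat.Prime.sigma_one_pow_succ {p : ℕ} (hp : p.Prime) (k : ℕ) :
    σ 1 (p ^ (k + 1)) = p * σ 1 (p ^ k) + 1 := by
  rw [sigma_one_apply_prime_pow hp, sigma_one_apply_prime_pow hp, geom_sum_succ]

theorem Real.one_lt_log_of_three_le {x : ℝ} (hx : 3 ≤ x) : 1 < log x := by
  rw [lt_log_iff_exp_lt (by linarith)]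
  exact exp_one_lt_three.trans_le hx

theorem Real.mul_log_lt_mul_log_iff {x y : ℝ} (hx : 0 < x) (hy : 0 < y) (m k : ℕ) :
    m * log x < k * log y ↔ x ^ m < y ^ k := by
  rw [← log_pow, ← log_pow, log_lt_log_iff (pow_pos hx m) (pow_pos hy k)]

theorem Real.div_lt_rpow_inv_iff {x L : ℝ} (hx : 0 ≤ x) (hL : 0 < L) {k : ℕ} (hk : 0 < k) :
    x / L < L ^ (k⁻¹ : ℝ) ↔ x ^ k < L ^ (k + 1) := by
  rw [lt_rpow_inv_iff_of_pos (by positivity) hL.le (by positivity), rpow_natCast, div_pow,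
    div_lt_iff₀ (by positivity), pow_succ']

theorem G_lt_G_iff {m n : ℕ} (hm : 3 ≤ m) (hn : 3 ≤ n) :
    G m < G n ↔
      (σ 1 m : ℝ) * n * Real.log (Real.log n) < σ 1 n * m * Real.log (Real.log m) := by
  have hpos {k : ℕ} (hk : 3 ≤ k) : 0 < (k : ℝ) * Real.log (Real.log k) :=
    mul_pos (by positivity) (Real.log_pos (one_lt_log_of_three_le (by exact_mod_cast hk)))
  rw [G, G, div_lt_div_iff₀ (hpos hm) (hpos hn)]
  ring_nf

theorem G_lt_G_mul_iff {n p S : ℕ} (hn : 3 ≤ n) (hp : 0 < p) (hS : 0 < S)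
    (hσ : σ 1 (n * p) * S = σ 1 n * p * (S + 1)) :
    G n < G (n * p) ↔ Real.log (n * p) ^ S < Real.log n ^ (S + 1) := by
  have hnR : (3 : ℝ) ≤ n := by exact_mod_cast hn
  have hnpR : (3 : ℝ) ≤ n * p :=
    hnR.trans (le_mul_of_one_le_right (by positivity) (by exact_mod_cast hp))
  have hσR : (σ 1 (n * p) : ℝ) * S = σ 1 n * p * (S + 1) := by exact_mod_cast hσ
  have hK : 0 < (σ 1 n : ℝ) * n * p := by
    have := sigma_pos 1 n (by omega)
    positivity
  set c := Real.log (Real.log n)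
  set d := Real.log (Real.log (n * p))
  calc G n < G (n * p)
      ↔ (σ 1 n : ℝ) * (n * p) * d < σ 1 (n * p) * n * c := by
        rw [G_lt_G_iff hn (by nlinarith), Nat.cast_mul]
    _ ↔ (σ 1 n : ℝ) * n * p * (S * d) < σ 1 n * n * p * ((S + 1) * c) := by
        rw [← mul_lt_mul_iff_left₀ (by exact_mod_cast hS : (0 : ℝ) < S)]
        constructor <;> intro h
        · linear_combination h + (n * c) * hσR
        · linear_combination h - (n * c) * hσR
    _ ↔ (S : ℝ) * d < ((S + 1 : ℕ) : ℝ) * c := by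
        push_cast
        exact mul_lt_mul_iff_right₀ hK
    _ ↔ Real.log (n * p) ^ S < Real.log n ^ (S + 1) :=
        mul_log_lt_mul_log_iff (by linarith [one_lt_log_of_three_le hnpR])
          (by linarith [one_lt_log_of_three_le hnR]) _ _

theorem gronwall_increase_iff_rpow_inv_sum (n : ℕ) (hn : 3 ≤ n) (p : ℕ) (hp : p.Prime)
    (S : ℕ) (hS : S = ∑ α ∈ Finset.Icc 1 (n.factorization p + 1), p ^ α) :
    G (n * p) > G n ↔ (Real.log n) ^ ((S : ℝ)⁻¹) > 1 + Real.log p / Real.log n := by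
  rw [← hp.mul_sigma_one_pow] at hS
  have hS0 : 0 < S := hS ▸ Nat.mul_pos hp.pos (sigma_pos 1 _ (pow_ne_zero _ hp.ne_zero))
  have hσ : σ 1 (n * p) * S = σ 1 n * p * (S + 1) := by
    rw [hS, ← hp.sigma_one_pow_succ, mul_left_comm,
      sigma_one_mul_prime_mul_sigma_one_ordProj (by omega) hp]
    ring
  have hL : 1 < Real.log n := one_lt_log_of_three_le (by exact_mod_cast hn)
  have hlog : 1 + Real.log p / Real.log n = Real.log (n * p) / Real.log n := by
    rw [Real.log_mul (by exact_mod_cast (by omega : n ≠ 0)) (by exact_mod_cast hp.ne_zero)]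
    field_simp [(zero_lt_one.trans hL).ne']
  rw [gt_iff_lt, gt_iff_lt, G_lt_G_mul_iff hn hp.pos hS0 hσ, hlog,
    div_lt_rpow_inv_iff (Real.log_nonneg (by norm_cast; nlinarith [hp.pos])) (by linarith) hS0]
end
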